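/- There does not exist a set of 3 incomplete mutually orthogonal binary frequency squares of type (n; n-2), i.e., three n×n arrays with an empty (n-2)×(n-2) top-left subarray, {0,1} entries elsewhere, balanced rows and columns, and pairwise orthogonality. -/

import Mathlib

/-- An incomplete binary frequency square of type (n; n-2): an n×n array
whose top-left (n-2)×(n-2) subarray is empty (its values are irrelevant),
all other cells contain 0 or 1, and every row and every column contains
equally many zeros and ones among its filled cells. -/
def IsIncFS (n : ℕ) (F : Fin n → Fin n → Fin 2) : Prop :=
  (∀ r : Fin n,
    (Finset.univ.filter fun c : Fin n =>
      ¬((r : ℕ) < n - 2 ∧ (c : ℕ) < n - 2) ∧ F r c = 0).card =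
    (Finset.univ.filter fun c : Fin n =>
      ¬((r : ℕ) < n - 2 ∧ (c : ℕ) < n - 2) ∧ F r c = 1).card) ∧
  (∀ c : Fin n,
    (Finset.univ.filter fun r : Fin n =>
      ¬((r : ℕ) < n - 2 ∧ (c : ℕ) < n - 2) ∧ F r c = 0).card =
    (Finset.univ.filter fun r : Fin n =>
      ¬((r : ℕ) < n - 2 ∧ (c : ℕ) < n - 2) ∧ F r c = 1).card)

/-- Two incomplete frequency squares of type (n; n-2) are orthogonal if each
of the four ordered pairs of symbols occurs equally often over the filled
cells of their superposition. -/
def IncOrth (n : ℕ) (F G : Fin n → Fin n → Fin 2) : Prop :=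
  ∀ a b a' b' : Fin 2,
    (Finset.univ.filter fun p : Fin n × Fin n =>
      ¬((p.1 : ℕ) < n - 2 ∧ (p.2 : ℕ) < n - 2) ∧
        F p.1 p.2 = a ∧ G p.1 p.2 = b).card =
    (Finset.univ.filter fun p : Fin n × Fin n =>
      ¬((p.1 : ℕ) < n - 2 ∧ (p.2 : ℕ) < n - 2) ∧
        F p.1 p.2 = a' ∧ G p.1 p.2 = b').card

/-!
Write the symbols as signs `0 ↦ 1`, `1 ↦ -1` and put `m = n - 2`. In each of the first `m` rows
only the last two cells are filled, so they carry opposite signs; likewise for the first `m`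
columns. Hence the sign sum of the bottom-right `2 × 2` corner vanishes, and the first column
sum of the corner equals the sum of column `m + 1` over the first `m` rows (dually for rows).

Orthogonality of `F` and `G` says that the products of their signs sum to zero over the filled
cells. Each of the first `m` rows and columns contributes twice the product in its cell of
index `m + 1`, and `x y ≡ x + y - 1 (mod 4)` for signs, so modulo `8`
(using that `m` is even) this identity becomes a congruence between the two `2 × 2` corners
alone. Checking all corners shows that it forces exactly one of `F`, `G` to have a balanced
first corner column, which cannot hold for all three pairs of three squares.
-/

open Finset

def toSign (a : Fin 2) : ℤ := (-1) ^ (a : ℕ)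

theorem sum_comp_of_card_fiber_eq {α β M : Type*} [Fintype β] [DecidableEq β]
    [AddCommMonoid M] {s : Finset α} {f : α → β} {c : ℕ} (hc : ∀ b, #{x ∈ s | f x = b} = c)
    (g : β → M) : ∑ x ∈ s, g (f x) = c • ∑ b, g b := by
  rw [← sum_fiberwise' s f g, smul_sum]
  exact sum_congr rfl fun b _ => by rw [sum_const, hc]

theorem sum_toSign_eq_zero {α : Type*} {s : Finset α} {f : α → Fin 2}
    (h : #{x ∈ s | f x = 0} = #{x ∈ s | f x = 1}) : ∑ x ∈ s, toSign (f x) = 0 := by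
  rw [sum_comp_of_card_fiber_eq (c := #{x ∈ s | f x = 0}) (by simp [Fin.forall_fin_two, h])]
  simp [toSign]

theorem sum_toSign_mul_eq_zero {α : Type*} {s : Finset α} {f g : α → Fin 2}
    (h : ∀ a b a' b' : Fin 2,
      #{x ∈ s | f x = a ∧ g x = b} = #{x ∈ s | f x = a' ∧ g x = b'}) :
    ∑ x ∈ s, toSign (f x) * toSign (g x) = 0 := by
  have hc : ∀ p : Fin 2 × Fin 2, #{x ∈ s | (f x, g x) = p} = #{x ∈ s | f x = 0 ∧ g x = 0} := by
    rintro ⟨a, b⟩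
    simpa only [Prod.mk.injEq] using h a b 0 0
  rw [sum_comp_of_card_fiber_eq hc fun p => toSign p.1 * toSign p.2]
  simp [Fintype.sum_prod_type, toSign]

theorem two_mul_sum_toSign_mul_modEq {ι : Type*} (s : Finset ι) (f g : ι → Fin 2) :
    2 * ∑ i ∈ s, toSign (f i) * toSign (g i)
      ≡ 2 * (∑ i ∈ s, toSign (f i) + ∑ i ∈ s, toSign (g i) - #s) [ZMOD 8] := by
  have key : ∀ a b : Fin 2,
      2 * (toSign a * toSign b) ≡ 2 * (toSign a + toSign b - 1) [ZMOD 8] := by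
    decide
  calc 2 * ∑ i ∈ s, toSign (f i) * toSign (g i)
      = ∑ i ∈ s, 2 * (toSign (f i) * toSign (g i)) := mul_sum ..
    _ ≡ ∑ i ∈ s, 2 * (toSign (f i) + toSign (g i) - 1) [ZMOD 8] :=
        Int.ModEq.sum fun i _ => key (f i) (g i)
    _ = _ := by
        simp only [← mul_sum, sum_sub_distrib, sum_add_distrib, sum_const, nsmul_eq_mul, mul_one]

def colSum (X : Fin 2 → Fin 2 → Fin 2) : ℤ := toSign (X 0 0) + toSign (X 1 0)

/- A `2 × 2` sign block with zero sum has constant rows, constant columns or constant diagonals.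
The congruence holds exactly when one of `X`, `Y` has constant rows and the other constant
columns. -/
theorem colSum_eq_zero_iff_of_modEq {X Y : Fin 2 → Fin 2 → Fin 2}
    (hX : ∑ k, ∑ l, toSign (X k l) = 0) (hY : ∑ k, ∑ l, toSign (Y k l) = 0)
    (h : ∑ k, ∑ l, toSign (X k l) * toSign (Y k l)
      + 2 * (colSum X + colSum Y + colSum (flip X) + colSum (flip Y)) ≡ 0 [ZMOD 8]) :
    colSum X = 0 ↔ colSum Y ≠ 0 := by
  revert X Y
  unfold colSum toSign
  decide

section General

variable {n : ℕ} {F G : Fin n → Fin n → Fin 2}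

theorem IsIncFS.sum_row (hF : IsIncFS n F) (r : Fin n) :
    ∑ c : Fin n with ¬((r : ℕ) < n - 2 ∧ ((c : Fin n) : ℕ) < n - 2), toSign (F r c) = 0 :=
  sum_toSign_eq_zero (by simpa only [filter_filter] using hF.1 r)

theorem IsIncFS.flip (hF : IsIncFS n F) : IsIncFS n (flip F) := by
  constructor <;> intro r <;> simp only [Function.flip_def]
  · simpa only [and_comm (a := (r : ℕ) < n - 2)] using hF.2 r
  · simpa only [and_comm (b := (r : ℕ) < n - 2)] using hF.1 r

theorem IncOrth.sum_toSign_mul (h : IncOrth n F G) :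
    ∑ p : Fin n × Fin n with ¬((p.1 : ℕ) < n - 2 ∧ (p.2 : ℕ) < n - 2),
      toSign (F p.1 p.2) * toSign (G p.1 p.2) = 0 :=
  sum_toSign_mul_eq_zero fun a b a' b' => by simpa only [filter_filter, and_assoc] using h a b a' b'

end General

section Border

variable {m : ℕ} {F G : Fin (m + 2) → Fin (m + 2) → Fin 2}

def corner (F : Fin (m + 2) → Fin (m + 2) → Fin 2) (k l : Fin 2) : Fin 2 :=
  F (Fin.natAdd m k) (Fin.natAdd m l)

theorem sum_filled_castAdd (i : Fin m) (φ : Fin (m + 2) → ℤ) :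
    ∑ c : Fin (m + 2) with ¬((Fin.castAdd 2 i : ℕ) < m + 2 - 2 ∧ ((c : Fin (m + 2)) : ℕ) < m + 2 - 2),
      φ c = φ (Fin.natAdd m 0) + φ (Fin.natAdd m 1) := by
  rw [sum_filter, Fin.sum_univ_add, Fin.sum_univ_two, sum_eq_zero fun x _ => if_neg (by simp),
    zero_add, if_pos (by simp), if_pos (by simp)]

theorem sum_filled_natAdd (k : Fin 2) (φ : Fin (m + 2) → ℤ) :
    ∑ c : Fin (m + 2) with ¬((Fin.natAdd m k : ℕ) < m + 2 - 2 ∧ ((c : Fin (m + 2)) : ℕ) < m + 2 - 2),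
      φ c = ∑ j : Fin m, φ (Fin.castAdd 2 j) + (φ (Fin.natAdd m 0) + φ (Fin.natAdd m 1)) := by
  rw [filter_true_of_mem fun c _ => by simp, Fin.sum_univ_add, Fin.sum_univ_two]

theorem IsIncFS.toSign_short_row (hF : IsIncFS (m + 2) F) (i : Fin m) :
    toSign (F (Fin.castAdd 2 i) (Fin.natAdd m 0))
      = -toSign (F (Fin.castAdd 2 i) (Fin.natAdd m 1)) := by
  have h := hF.sum_row (Fin.castAdd 2 i)
  rw [sum_filled_castAdd] at h
  linarith

theorem IsIncFS.toSign_short_col (hF : IsIncFS (m + 2) F) (j : Fin m) :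
    toSign (F (Fin.natAdd m 0) (Fin.castAdd 2 j))
      = -toSign (F (Fin.natAdd m 1) (Fin.castAdd 2 j)) :=
  hF.flip.toSign_short_row j

theorem IsIncFS.sum_long_row (hF : IsIncFS (m + 2) F) (k : Fin 2) :
    ∑ j : Fin m, toSign (F (Fin.natAdd m k) (Fin.castAdd 2 j))
      + (toSign (corner F k 0) + toSign (corner F k 1)) = 0 := by
  simpa only [sum_filled_natAdd, corner] using hF.sum_row (Fin.natAdd m k)

theorem IsIncFS.colSum_corner (hF : IsIncFS (m + 2) F) :
    colSum (corner F) = ∑ i : Fin m, toSign (F (Fin.castAdd 2 i) (Fin.natAdd m 1)) := by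
  have h := hF.flip.sum_long_row 0
  simp only [corner, Function.flip_def, hF.toSign_short_row, sum_neg_distrib] at h
  rw [colSum, corner, corner]
  linarith

theorem IsIncFS.sum_corner (hF : IsIncFS (m + 2) F) :
    ∑ k, ∑ l, toSign (corner F k l) = 0 := by
  have h0 := hF.sum_long_row 0
  have h1 := hF.sum_long_row 1
  simp only [hF.toSign_short_col, sum_neg_distrib] at h0
  simp only [Fin.sum_univ_two]
  linarith

theorem IncOrth.sum_toSign_mul_eq_border_add_corner (hF : IsIncFS (m + 2) F)
    (hG : IsIncFS (m + 2) G) (hFG : IncOrth (m + 2) F G) :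
    2 * ∑ i : Fin m, toSign (F (Fin.castAdd 2 i) (Fin.natAdd m 1))
          * toSign (G (Fin.castAdd 2 i) (Fin.natAdd m 1))
      + 2 * ∑ j : Fin m, toSign (F (Fin.natAdd m 1) (Fin.castAdd 2 j))
          * toSign (G (Fin.natAdd m 1) (Fin.castAdd 2 j))
      + ∑ k, ∑ l, toSign (corner F k l) * toSign (corner G k l) = 0 := by
  have h := hFG.sum_toSign_mul
  rw [sum_filter, Fintype.sum_prod_type] at h
  simp only [← sum_filter, Fin.sum_univ_add, sum_filled_castAdd, sum_filled_natAdd,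
    Fin.sum_univ_two, hF.toSign_short_row, hG.toSign_short_row, hF.toSign_short_col,
    hG.toSign_short_col, neg_mul_neg, ← two_mul, ← mul_sum, sum_add_distrib] at h
  simp only [Fin.sum_univ_two, corner]
  linarith

theorem IncOrth.corner_modEq (hm : Even m) (hF : IsIncFS (m + 2) F) (hG : IsIncFS (m + 2) G)
    (hFG : IncOrth (m + 2) F G) :
    ∑ k, ∑ l, toSign (corner F k l) * toSign (corner G k l)
      + 2 * (colSum (corner F) + colSum (corner G) + colSum (corner (flip F))
        + colSum (corner (flip G))) ≡ 0 [ZMOD 8] := by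
  have hcol := two_mul_sum_toSign_mul_modEq univ
    (fun i => F (Fin.castAdd 2 i) (Fin.natAdd m 1)) (fun i => G (Fin.castAdd 2 i) (Fin.natAdd m 1))
  have hrow := two_mul_sum_toSign_mul_modEq univ
    (fun j => F (Fin.natAdd m 1) (Fin.castAdd 2 j)) (fun j => G (Fin.natAdd m 1) (Fin.castAdd 2 j))
  have h := hFG.sum_toSign_mul_eq_border_add_corner hF hG
  rw [hF.colSum_corner, hG.colSum_corner, hF.flip.colSum_corner, hG.flip.colSum_corner]
  simp only [Function.flip_def, card_univ, Fintype.card_fin] at hcol hrow ⊢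
  obtain ⟨r, rfl⟩ := hm
  unfold Int.ModEq at *
  push_cast at *
  omega

theorem IncOrth.colSum_corner_eq_zero_iff (hm : Even m) (hF : IsIncFS (m + 2) F)
    (hG : IsIncFS (m + 2) G) (hFG : IncOrth (m + 2) F G) :
    colSum (corner F) = 0 ↔ colSum (corner G) ≠ 0 :=
  colSum_eq_zero_iff_of_modEq hF.sum_corner hG.sum_corner (hFG.corner_modEq hm hF hG)

end Border

/-- There is no set of 3 pairwise orthogonal incomplete binary frequency
squares of type (n; n-2). -/
theorem stmt_18 (n : ℕ) (hn : 4 ≤ n) (hne : Even n) :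
    ¬ ∃ F G H : Fin n → Fin n → Fin 2,
        IsIncFS n F ∧ IsIncFS n G ∧ IsIncFS n H ∧
        IncOrth n F G ∧ IncOrth n F H ∧ IncOrth n G H := by
  obtain ⟨m, rfl⟩ : ∃ m, n = m + 2 := ⟨n - 2, by omega⟩
  have hm : Even m := (Nat.even_add.1 hne).2 even_two
  rintro ⟨F, G, H, hF, hG, hH, hFG, hFH, hGH⟩
  have := hFG.colSum_corner_eq_zero_iff hm hF hG
  have := hFH.colSum_corner_eq_zero_iff hm hF hH
  have := hGH.colSum_corner_eq_zero_iff hm hG hH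
  tauto
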